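/- Let X = lim S, where S = (X_α, r^β_α, ω₁) is a continuous inverse sequence indexed by the first uncountable ordinal ω₁ such that each X_α is a compact metrizable space and each successor bonding map r^{α+1}_α : X_{α+1} → X_α is a retraction. Then X is Valdivia compact. -/

import Mathlib

open Set Filter Topology

universe u

/-- A continuous inverse sequence over a well-ordered index set `ι` (representing an
ordinal): continuous surjective bonding maps with identity and composition laws,
such that at every limit point `δ` of `ι` the map `X δ → Π_{α<δ} X α` is injective. -/
structure IsContInvSeq {ι : Type*} [LinearOrder ι] {X : ι → Type*}
    [∀ α, TopologicalSpace (X α)]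
    (r : ∀ ⦃α β : ι⦄, α ≤ β → X β → X α) : Prop where
  continuous : ∀ ⦃α β : ι⦄ (h : α ≤ β), Continuous (r h)
  surjective : ∀ ⦃α β : ι⦄ (h : α ≤ β), Function.Surjective (r h)
  map_id : ∀ (α : ι) (x : X α), r (le_refl α) x = x
  map_comp : ∀ ⦃α β γ : ι⦄ (h₁ : α ≤ β) (h₂ : β ≤ γ) (x : X γ),
    r h₁ (r h₂ x) = r (h₁.trans h₂) x
  limit_inj : ∀ δ : ι, (∃ α, α < δ) → (∀ α, α < δ → ∃ β, α < β ∧ β < δ) →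
    ∀ x y : X δ, (∀ (α : ι) (h : α < δ), r h.le x = r h.le y) → x = y

/-- The limit of an inverse sequence: the space of threads, a subspace of the
product `Π α, X α`. -/
abbrev InvLim {ι : Type*} [LinearOrder ι] {X : ι → Type*}
    [∀ α, TopologicalSpace (X α)]
    (r : ∀ ⦃α β : ι⦄, α ≤ β → X β → X α) : Type _ :=
  {x : ∀ α, X α // ∀ ⦃α β : ι⦄ (h : α ≤ β), r h (x β) = x α}

/-- A continuous surjection which admits a continuous right inverse. -/
def IsRetraction {X Y : Type*} [TopologicalSpace X] [TopologicalSpace Y]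
    (f : X → Y) : Prop :=
  Continuous f ∧ Function.Surjective f ∧ ∃ g : Y → X, Continuous g ∧ f ∘ g = id

/-- `Σ(T)`: the points of the Tikhonov cube `[0,1]^T` with countable support. -/
def SigmaProd (T : Type*) : Set (T → unitInterval) :=
  {x | {t | x t ≠ 0}.Countable}

/-- A Valdivia embedding into the cube `[0,1]^T`. -/
def IsValdiviaEmbedding {X : Type*} [TopologicalSpace X] {T : Type*}
    (h : X → T → unitInterval) : Prop :=
  Topology.IsEmbedding h ∧ Set.range h = closure (Set.range h ∩ SigmaProd T)

/-- A space is Valdivia compact if it admits a Valdivia embedding into some cube. -/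
def IsValdivia (X : Type u) [TopologicalSpace X] : Prop :=
  ∃ (T : Type u) (h : X → T → unitInterval), IsValdiviaEmbedding h

/-! Choose continuous sections `sec α : X α → X (succ α)` of the successor bonding maps and
embeddings `F α` of the compact metrizable spaces `X α` into the Hilbert cube. A thread `z` is
coded by `F ⊥ (z ⊥)` and, for every `α`, by the positive and negative parts of
`F (succ α) (z (succ α)) - F (succ α) (sec α (z α))`. By transfinite induction (using the
injectivity of the bonding maps at limits) the code is injective, hence an embedding of the
compact limit. The threads which eventually follow the sections, `z (succ β) = sec β (z β)` for
`β ≥ γ`, are dense by a compactness argument, and their codes are supported on the countably many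
coordinates below `γ`. -/

open Order unitInterval

theorem isValdiviaEmbedding_of_dense {K T : Type*} [TopologicalSpace K] [CompactSpace K]
    {h : K → T → I} (hc : Continuous h) (hi : Function.Injective h) {D : Set K}
    (hD : Dense D) (hDsupp : ∀ z ∈ D, h z ∈ SigmaProd T) : IsValdiviaEmbedding h := by
  have he := hc.isClosedEmbedding hi
  refine ⟨he.isEmbedding, Subset.antisymm ?_ ?_⟩
  · calc range h = h '' closure D := by rw [hD.closure_eq, image_univ]
      _ ⊆ closure (h '' D) := image_closure_subset_closure_image hc
      _ ⊆ closure (range h ∩ SigmaProd T) :=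
        closure_mono <| image_subset_iff.2 fun z hz => ⟨mem_range_self z, hDsupp z hz⟩
  · exact he.isClosed_range.closure_subset_iff.2 inter_subset_left

theorem unitInterval.eq_of_projIcc_sub_eq {a b c : I}
    (h₁ : projIcc 0 1 zero_le_one ((a : ℝ) - c) = projIcc 0 1 zero_le_one ((b : ℝ) - c))
    (h₂ : projIcc 0 1 zero_le_one ((c : ℝ) - a) = projIcc 0 1 zero_le_one ((c : ℝ) - b)) :
    a = b := by
  have ha := a.2; have hb := b.2; have hc := c.2
  simp only [Subtype.ext_iff, coe_projIcc] at h₁ h₂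
  simp only [mem_Icc] at ha hb hc
  apply Subtype.ext
  rw [min_eq_right (by linarith), min_eq_right (by linarith)] at h₁ h₂
  rw [max_def, max_def] at h₁ h₂
  split_ifs at h₁ h₂ <;> linarith

namespace IsContInvSeq

variable {ι : Type*} [LinearOrder ι] {X : ι → Type*} [∀ α, TopologicalSpace (X α)]
  {r : ∀ ⦃α β : ι⦄, α ≤ β → X β → X α}

theorem isClosed_setOf_map_eq [∀ α, T2Space (X α)] (hseq : IsContInvSeq r) {α β : ι}
    (h : α ≤ β) : IsClosed {x : ∀ α, X α | r h (x β) = x α} :=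
  isClosed_eq ((hseq.continuous h).comp (continuous_apply β)) (continuous_apply α)

theorem compactSpace_invLim [∀ α, CompactSpace (X α)] [∀ α, T2Space (X α)]
    (hseq : IsContInvSeq r) : CompactSpace (InvLim r) := by
  have hclosed : IsClosed {x : ∀ α, X α | ∀ ⦃α β : ι⦄ (h : α ≤ β), r h (x β) = x α} := by
    simp only [ofPred_forall]
    exact isClosed_iInter fun α => isClosed_iInter fun β => isClosed_iInter fun h =>
      hseq.isClosed_setOf_map_eq h
  exact isCompact_iff_compactSpace.mp hclosed.isCompact

theorem surjective_eval [∀ α, CompactSpace (X α)] [∀ α, T2Space (X α)]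
    (hseq : IsContInvSeq r) (δ : ι) : Function.Surjective fun z : InvLim r => z.1 δ := by
  intro u
  have : ∀ c, Nonempty (X c) := fun c =>
    (le_total c δ).elim (fun h => ⟨r h u⟩) fun h => ⟨(hseq.surjective h u).choose⟩
  have : Nonempty ι := ⟨δ⟩
  let K : ι → Set (∀ α, X α) := fun m =>
    {z | z δ = u} ∩ ⋂ (α) (β) (h : α ≤ β) (_ : β ≤ m), {z | r h (z β) = z α}
  have hK_anti : Antitone K := fun m m' hm => inter_subset_inter_right _ <|
    iInter₂_mono fun _ _ => iInter_mono fun _ => iInter_mono' fun hβ => ⟨hβ.trans hm, le_rfl⟩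
  have hK_closed : ∀ m, IsClosed (K m) := fun m =>
    (isClosed_eq (continuous_apply δ) continuous_const).inter <|
      isClosed_iInter fun α => isClosed_iInter fun β => isClosed_iInter fun h =>
        isClosed_iInter fun _ => hseq.isClosed_setOf_map_eq h
  have hK_nonempty : ∀ m, (K m).Nonempty := by
    intro m
    obtain ⟨w, hw⟩ := hseq.surjective (le_max_right m δ) u
    refine ⟨fun c => if hc : c ≤ max m δ then r hc w else Classical.arbitrary _, ?_⟩
    simp only [K, mem_inter_iff, mem_ofPred_eq, mem_iInter]
    refine ⟨by simp [hw], fun α β h hβ => ?_⟩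
    have hβ' : β ≤ max m δ := hβ.trans (le_max_left _ _)
    simp only [dif_pos hβ', dif_pos (h.trans hβ'), hseq.map_comp]
  obtain ⟨z, hz⟩ := IsCompact.nonempty_iInter_of_directed_nonempty_isCompact_isClosed K
    hK_anti.directed_ge hK_nonempty (fun m => (hK_closed m).isCompact) hK_closed
  simp only [K, mem_iInter, mem_inter_iff, mem_ofPred_eq] at hz
  exact ⟨⟨z, fun α β h => (hz β).2 α β h le_rfl⟩, (hz δ).1⟩

section SuccOrder

variable [SuccOrder ι]

theorem invLim_ext [WellFoundedLT ι] (hseq : IsContInvSeq r) {z w : InvLim r}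
    (hmin : ∀ α, IsMin α → z.1 α = w.1 α)
    (hsucc : ∀ α, z.1 α = w.1 α → z.1 (succ α) = w.1 (succ α)) : z = w := by
  refine Subtype.ext <| funext fun δ => ?_
  induction δ using SuccOrder.limitRecOn with
  | isMin α hα => exact hmin α hα
  | succ α _ ih => exact hsucc α ih
  | isSuccLimit δ hδ ih =>
    refine hseq.limit_inj δ (not_isMin_iff.1 hδ.not_isMin)
      (fun α hα => ⟨succ α, lt_succ_of_not_isMax hα.not_isMax, hδ.succ_lt hα⟩) _ _
      fun α hα => ?_
    rw [z.2, w.2, ih α hα]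

variable (sec : ∀ α, X α → X (succ α))

theorem exists_eventually_sec [∀ α, CompactSpace (X α)] [∀ α, T2Space (X α)]
    (hseq : IsContInvSeq r) (hsec : ∀ α, Continuous (sec α))
    (hr : ∀ α u, r (le_succ α) (sec α u) = u) (γ : ι) (x : InvLim r) :
    ∃ z : InvLim r, z.1 γ = x.1 γ ∧ ∀ β, γ ≤ β → z.1 (succ β) = sec β (z.1 β) := by
  have := hseq.compactSpace_invLim
  let t : ι → Set (InvLim r) := fun β => {z | γ ≤ β → z.1 (succ β) = sec β (z.1 β)}
  have ht : ∀ β, IsClosed (t β) := fun β => by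
    by_cases hγβ : γ ≤ β
    · simp only [t, hγβ, forall_const]
      exact isClosed_eq ((continuous_apply _).comp continuous_subtype_val)
        ((hsec β).comp ((continuous_apply β).comp continuous_subtype_val))
    · simp [t, hγβ]
  have hfin : ∀ F : Finset ι, ({z : InvLim r | z.1 γ = x.1 γ} ∩ ⋂ β ∈ F, t β).Nonempty := by
    intro F
    classical
    induction F using Finset.induction_on_max with
    | empty => exact ⟨x, rfl, by simp⟩
    | insert a F haF ih =>
      obtain ⟨z, hzγ, hzF⟩ := ih
      simp only [mem_iInter] at hzF
      by_cases hγa : γ ≤ a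
      -- lift `sec a (z a)` to a thread: it agrees with `z` up to `a`
      · obtain ⟨z', hz' : z'.1 (succ a) = _⟩ := hseq.surjective_eval (succ a) (sec a (z.1 a))
        have hz'z : ∀ β ≤ a, z'.1 β = z.1 β := fun β hβ => by
          rw [← z'.2 (hβ.trans (le_succ a)), hz', ← hseq.map_comp hβ (le_succ a), hr, z.2]
        refine ⟨z', (hz'z γ hγa).trans hzγ, ?_⟩
        simp only [Finset.mem_insert, mem_iInter]
        rintro β (rfl | hβ) hγβ
        · rw [hz', hz'z β le_rfl]
        · rw [hz'z _ (succ_le_of_lt (haF β hβ)), hz'z β (haF β hβ).le, hzF β hβ hγβ]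
      · refine ⟨z, hzγ, ?_⟩
        simp only [Finset.mem_insert, mem_iInter]
        rintro β (rfl | hβ)
        · exact fun h => absurd h hγa
        · exact hzF β hβ
  obtain ⟨z, hzγ, hz⟩ := isClosed_eq ((continuous_apply γ).comp continuous_subtype_val)
    continuous_const |>.isCompact.inter_iInter_nonempty t ht hfin
  exact ⟨z, hzγ, mem_iInter.1 hz⟩

theorem dense_eventually_sec [Nonempty ι] [∀ α, CompactSpace (X α)] [∀ α, T2Space (X α)]
    (hseq : IsContInvSeq r) (hsec : ∀ α, Continuous (sec α))
    (hr : ∀ α u, r (le_succ α) (sec α u) = u) :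
    Dense {z : InvLim r | ∃ γ, ∀ β, γ ≤ β → z.1 (succ β) = sec β (z.1 β)} := by
  intro x
  choose z hzγ hz using fun γ => hseq.exists_eventually_sec sec hsec hr γ x
  refine mem_closure_of_tendsto (f := z) (b := atTop) ?_
    (Eventually.of_forall fun γ => ⟨γ, hz γ⟩)
  refine tendsto_subtype_rng.2 <| tendsto_pi_nhds.2 fun α => tendsto_const_nhds.congr' ?_
  filter_upwards [eventually_ge_atTop α] with γ hγ
  rw [← x.2 hγ, ← (z γ).2 hγ, hzγ]

end SuccOrder

end IsContInvSeq

section ValdiviaMap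

variable {ι : Type*} [LinearOrder ι] [OrderBot ι] [SuccOrder ι] {X : ι → Type*}
  [∀ α, TopologicalSpace (X α)] {r : ∀ ⦃α β : ι⦄, α ≤ β → X β → X α}
  (F : ∀ α, X α → ℕ → I) (sec : ∀ α, X α → X (succ α))

/-- `projIcc 0 1` acts as the positive part here, since `a - c` and `c - a` lie in `[-1, 1]`. -/
noncomputable def valdiviaMap (z : InvLim r) : Option (ι × Bool) × ℕ → I
  | (none, n) => F ⊥ (z.1 ⊥) n
  | (some (α, b), n) =>
    let a : ℝ := F (succ α) (z.1 (succ α)) n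
    let c : ℝ := F (succ α) (sec α (z.1 α)) n
    projIcc 0 1 zero_le_one (if b then a - c else c - a)

theorem continuous_valdiviaMap (hF : ∀ α, Continuous (F α)) (hsec : ∀ α, Continuous (sec α)) :
    Continuous (valdiviaMap (r := r) F sec) := by
  refine continuous_pi ?_
  rintro ⟨_ | ⟨α, b⟩, n⟩
  · exact (continuous_apply n).comp <| (hF ⊥).comp <|
      (continuous_apply _).comp continuous_subtype_val
  · have hz : Continuous fun z : InvLim r => (z.1 (succ α) : X (succ α)) :=
      (continuous_apply _).comp continuous_subtype_val
    have hs : Continuous fun z : InvLim r => sec α (z.1 α) :=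
      (hsec α).comp <| (continuous_apply _).comp continuous_subtype_val
    have ha := continuous_subtype_val.comp <| (continuous_apply n).comp <| (hF (succ α)).comp hz
    have hc := continuous_subtype_val.comp <| (continuous_apply n).comp <| (hF (succ α)).comp hs
    cases b
    · exact continuous_projIcc.comp (hc.sub ha)
    · exact continuous_projIcc.comp (ha.sub hc)

theorem injective_valdiviaMap [WellFoundedLT ι] (hseq : IsContInvSeq r)
    (hF : ∀ α, Function.Injective (F α)) : Function.Injective (valdiviaMap (r := r) F sec) := by
  intro z w h
  refine hseq.invLim_ext (fun α hα => ?_) fun α hα => hF _ <| funext fun n => ?_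
  · rw [hα.eq_bot]
    exact hF ⊥ <| funext fun n => congrFun h (none, n)
  · have h₁ := congrFun h (some (α, true), n)
    have h₂ := congrFun h (some (α, false), n)
    simp only [valdiviaMap, hα] at h₁ h₂
    exact unitInterval.eq_of_projIcc_sub_eq h₁ h₂

theorem valdiviaMap_mem_sigmaProd (hcount : ∀ γ : ι, (Iio γ).Countable) {z : InvLim r} {γ : ι}
    (hz : ∀ β, γ ≤ β → z.1 (succ β) = sec β (z.1 β)) :
    valdiviaMap F sec z ∈ SigmaProd (Option (ι × Bool) × ℕ) := by
  refine (((((hcount γ).prod countable_univ).image some).insert none).prod countable_univ).mono ?_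
  rintro ⟨_ | ⟨α, b⟩, n⟩ hne
  · simp
  · simp only [mem_prod, mem_insert_iff, mem_image, mem_univ, and_true]
    refine Or.inr ⟨(α, b), not_le.1 fun hγα => hne ?_, rfl⟩
    simp [valdiviaMap, hz α hγα]

end ValdiviaMap

theorem TopologicalSpace.MetrizableSpace.exists_isEmbedding_hilbert_cube (Y : Type*)
    [TopologicalSpace Y] [MetrizableSpace Y] [SeparableSpace Y] :
    ∃ F : Y → ℕ → I, IsEmbedding F :=
  letI := metrizableSpaceMetric Y
  Metric.PiNatEmbed.exists_embedding_to_hilbert_cube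

theorem isValdivia_invLim {ι : Type u} [LinearOrder ι] [OrderBot ι] [SuccOrder ι]
    [WellFoundedLT ι] (hcount : ∀ γ : ι, (Iio γ).Countable) {X : ι → Type u}
    [∀ α, TopologicalSpace (X α)] [∀ α, CompactSpace (X α)]
    [∀ α, TopologicalSpace.MetrizableSpace (X α)] {r : ∀ ⦃α β : ι⦄, α ≤ β → X β → X α}
    (hseq : IsContInvSeq r) (hretr : ∀ α, IsRetraction (r (le_succ α))) :
    IsValdivia (InvLim r) := by
  have := hseq.compactSpace_invLim
  choose sec hsec hr using fun α => (hretr α).2.2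
  choose F hF using fun α =>
    TopologicalSpace.MetrizableSpace.exists_isEmbedding_hilbert_cube (X α)
  refine ⟨_, valdiviaMap F sec, isValdiviaEmbedding_of_dense
    (continuous_valdiviaMap F sec (fun α => (hF α).continuous) hsec)
    (injective_valdiviaMap F sec hseq fun α => (hF α).injective)
    (hseq.dense_eventually_sec sec hsec fun α => congrFun (hr α)) ?_⟩
  rintro z ⟨γ, hz⟩
  exact valdiviaMap_mem_sigmaProd F sec hcount hz

theorem statement11_general
    {X : (Cardinal.aleph 1 : Cardinal.{u}).ord.ToType → Type u}
    [∀ α, TopologicalSpace (X α)] [∀ α, CompactSpace (X α)]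
    [∀ α, TopologicalSpace.MetrizableSpace (X α)]
    (r : ∀ ⦃α β : (Cardinal.aleph 1 : Cardinal.{u}).ord.ToType⦄,
      α ≤ β → X β → X α)
    (hseq : IsContInvSeq r)
    (hsucc : ∀ (α β : (Cardinal.aleph 1 : Cardinal.{u}).ord.ToType) (h : α < β),
      (∀ γ, α < γ → β ≤ γ) → IsRetraction (r h.le)) :
    IsValdivia (InvLim r) := by
  have : NoMaxOrder (Cardinal.aleph 1 : Cardinal.{u}).ord.ToType :=
    Cardinal.noMaxOrder (Cardinal.aleph0_le_aleph 1)
  have : Nonempty (Cardinal.aleph 1 : Cardinal.{u}).ord.ToType :=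
    Cardinal.nonempty_ord_toType (Cardinal.aleph_pos 1).ne'
  let := WellFoundedLT.toOrderBot (Cardinal.aleph 1 : Cardinal.{u}).ord.ToType
  have hcount (γ : (Cardinal.aleph 1 : Cardinal.{u}).ord.ToType) : (Iio γ).Countable :=
    Cardinal.le_aleph0_iff_set_countable.1 <| Cardinal.lt_aleph_one_iff.1 <| by
      simpa using Cardinal.mk_Iio_lt γ
  exact isValdivia_invLim hcount hseq
    fun α => hsucc α (succ α) (lt_succ α) fun _ => succ_le_of_lt

/-- the limit of a continuous inverse sequence indexed by the first
uncountable ordinal `ω₁`, consisting of compact metrizable spaces and whose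
successor bonding maps are retractions, is Valdivia compact. -/
theorem statement11
    {X : (Cardinal.aleph 1 : Cardinal.{u}).ord.ToType → Type u}
    [∀ α, TopologicalSpace (X α)] [∀ α, CompactSpace (X α)] [∀ α, T2Space (X α)]
    [∀ α, TopologicalSpace.MetrizableSpace (X α)]
    (r : ∀ ⦃α β : (Cardinal.aleph 1 : Cardinal.{u}).ord.ToType⦄,
      α ≤ β → X β → X α)
    (hseq : IsContInvSeq r)
    (hsucc : ∀ (α β : (Cardinal.aleph 1 : Cardinal.{u}).ord.ToType) (h : α < β),
      (∀ γ, α < γ → β ≤ γ) → IsRetraction (r h.le)) :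
    IsValdivia (InvLim r) :=
  statement11_general r hseq hsucc
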